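/- A countable, locally infinite, primitive graph of finite diameter n cannot have distance sequence ending in 1; that is, if for every vertex v there is exactly one vertex at distance n from v, then the graph is imprimitive. -/
import Mathlib

def VertexTransitive {V : Type*} (G : SimpleGraph V) : Prop :=
  ∀ u v : V, ∃ φ : G ≃g G, φ u = v

def InvariantRel {V : Type*} (G : SimpleGraph V) (r : V → V → Prop) : Prop :=
  ∀ φ : G ≃g G, ∀ u v : V, r u v ↔ r (φ u) (φ v)

def GraphPrimitive {V : Type*} (G : SimpleGraph V) : Prop :=
  ∀ r : V → V → Prop, Equivalence r → InvariantRel G r →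
    (∀ u v : V, r u v ↔ u = v) ∨ (∀ u v : V, r u v)

def DistanceTransitive {V : Type*} (G : SimpleGraph V) : Prop :=
  ∀ a b c d : V, G.dist a b = G.dist c d → ∃ φ : G ≃g G, φ a = c ∧ φ b = d

private lemma iso_dist_le {V : Type*} {G : SimpleGraph V} (hconn : G.Connected)
    (φ : G ≃g G) (u v : V) : G.dist (φ u) (φ v) ≤ G.dist u v := by
  obtain ⟨p, hp⟩ := hconn.exists_walk_length_eq_dist u v
  calc G.dist (φ u) (φ v) ≤ (p.map φ.toHom).length := SimpleGraph.dist_le _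
    _ = G.dist u v := by rw [SimpleGraph.Walk.length_map, hp]

private lemma iso_dist {V : Type*} {G : SimpleGraph V} (hconn : G.Connected)
    (φ : G ≃g G) (u v : V) : G.dist (φ u) (φ v) = G.dist u v := by
  refine le_antisymm (iso_dist_le hconn φ u v) ?_
  have := iso_dist_le hconn φ.symm (φ u) (φ v)
  simpa using this

/-- A countable, locally infinite, vertex-transitive graph of finite diameter `n` in which
every vertex has exactly one vertex at distance `n` from it is imprimitive; hence no such
primitive graph has distance sequence ending in `1`. -/
theorem unique_antipode_imprimitive {V : Type*} [Countable V] [Infinite V]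
    (G : SimpleGraph V)
    (hli : ∀ v : V, (G.neighborSet v).Infinite)
    (hconn : G.Connected) (hvt : VertexTransitive G)
    (n : ℕ) (hn : 1 ≤ n)
    (hdiam_le : ∀ u v : V, G.dist u v ≤ n)
    (huniq : ∀ v : V, ∃! w : V, G.dist v w = n) :
    ¬ GraphPrimitive G := by
  -- first: n ≥ 2
  have hn2 : 2 ≤ n := by
    by_contra h
    have hn1 : n = 1 := by omega
    -- some vertex
    obtain ⟨v⟩ := hconn.nonempty
    obtain ⟨w, hw, huw⟩ := huniq v
    obtain ⟨a, ha, b, hb, hab⟩ := (hli v).nontrivial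
    have da : G.dist v a = n := by
      rw [hn1, SimpleGraph.dist_eq_one_iff_adj]; exact ha
    have db : G.dist v b = n := by
      rw [hn1, SimpleGraph.dist_eq_one_iff_adj]; exact hb
    exact hab ((huw a da).trans (huw b db).symm)
  intro hprim
  set r : V → V → Prop := fun u v => u = v ∨ G.dist u v = n with hr
  have hequiv : Equivalence r := by
    constructor
    · intro x; exact Or.inl rfl
    · intro x y h
      rcases h with h | h
      · exact Or.inl h.symm
      · exact Or.inr (by rwa [SimpleGraph.dist_comm])
    · intro x y z hxy hyz
      rcases hxy with h | h
      · rwa [h]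
      · rcases hyz with h' | h'
        · rw [← h']; exact Or.inr h
        · obtain ⟨w, _, huw⟩ := huniq y
          have hx : x = w := huw x (show G.dist y x = n by rwa [SimpleGraph.dist_comm] at h)
          have hz : z = w := huw z h'
          exact Or.inl (hx.trans hz.symm)
  have hinv : InvariantRel G r := by
    intro φ u v
    have hd := iso_dist hconn φ u v
    constructor
    · rintro (h | h)
      · exact Or.inl (congrArg φ h)
      · exact Or.inr (by rw [hd]; exact h)
    · rintro (h | h)
      · exact Or.inl (φ.injective h)
      · exact Or.inr (by rw [← hd]; exact h)
  rcases hprim r hequiv hinv with h | h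
  · obtain ⟨v⟩ := hconn.nonempty
    obtain ⟨w, hw, _⟩ := huniq v
    have hvw : v ≠ w := by
      intro he; rw [← he, SimpleGraph.dist_self] at hw; omega
    exact hvw ((h v w).mp (Or.inr hw))
  · obtain ⟨v⟩ := hconn.nonempty
    obtain ⟨a, ha⟩ := (hli v).nonempty
    have da : G.dist v a = 1 := SimpleGraph.dist_eq_one_iff_adj.mpr ha
    rcases h v a with he | hd
    · rw [he, SimpleGraph.dist_self] at da; omega
    · omega
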